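/- For every nonzero integer m, let S_m(n) = (1/m)·Σ_{k=1}^{n} ((−1)^{k+1}/k)·C(m·k, k)·C(n + (m−1)·k, n − k) for n ≥ 1 and S_m(0) = 0, and let A_m = Σ_{n≥0} S_m(n)·x^n ∈ ℚ[[x]]. Then (1 − x)·A_m = Σ_{n≥1} x^n/n, i.e., A_m = −log(1 − x)/(1 − x) as formal power series. -/

import Mathlib

open PowerSeries

/-- Generalized binomial coefficient `C(a, b) = a(a-1)⋯(a-b+1)/b!` for `a : ℚ`, `b : ℕ`. -/
noncomputable def gchoose (a : ℚ) (b : ℕ) : ℚ :=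
  (∏ i ∈ Finset.range b, (a - i)) / (Nat.factorial b)

/-- `S_m(n)` is the right-hand side of Bala's identity, with `S_m(0) = 0`. -/
noncomputable def S (m : ℤ) (n : ℕ) : ℚ :=
  (1 / (m : ℚ)) * ∑ k ∈ Finset.Icc 1 n,
    ((-1 : ℚ) ^ (k + 1) / (k : ℚ)) * gchoose ((m : ℚ) * k) k *
      gchoose ((n : ℚ) + ((m : ℚ) - 1) * k) (n - k)

/-!
The coefficient of `x^(n+1)` in `(1 - x) A_m` is `S_m(n+1) - S_m(n)`. Pascal's rule in the last
binomial turns `m` times this difference into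
`∑ k, (-1)^(k+1)/k * C(m k, k) * C(n + (m-1) k, n+1-k)`. After the reflection
`(-1)^k C(m k, k) = C(k (1-m) - 1, k)`, this sum is, term by term, `-1/(n+1)` times the terms with
`i ≥ 1` of the Hagen–Rothe convolution
`∑_{i+j=N} C(x + i z, i) * y/(y + j z) * C(y + j z, j) = C(x + y + N z, N)`
at `x = -1`, `y = m (n+1)`, `z = 1 - m`, `N = n + 1`, whose right side `C(n, n+1)` vanishes and
whose term `i = 0` is `m`. Hence it equals `m / (n+1)`.

For integers `y` and `z`, Hagen–Rothe follows by induction on `N`: raising `y` by one changes both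
sides by the case `N - 1` at `y + z`, so their difference is a `1`-periodic function of `y ∈ ℤ`,
and it vanishes at `y = 0`.
-/

open Finset

theorem gchoose_eq_choose (a : ℚ) (k : ℕ) : gchoose a k = Ring.choose a k := by
  rw [Ring.choose_eq_smul, gchoose, smul_eq_mul, div_eq_inv_mul, ← Polynomial.aeval_eq_smeval,
    Polynomial.aeval_def, Polynomial.eval₂_eq_eval_map, descPochhammer_map,
    descPochhammer_eval_eq_prod_range]

theorem Ring.choose_succ_right_eq {R : Type*} [CommRing R] [BinomialRing R] (r : R) (k : ℕ) :
    Ring.choose r (k + 1) * (k + 1) = Ring.choose r k * (r - k) := by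
  have h := Ring.choose_smul_choose r (Nat.le_succ k)
  rw [Nat.choose_succ_self_right, Nat.succ_sub le_rfl, Nat.sub_self, Ring.choose_one_right,
    nsmul_eq_mul, mul_comm] at h
  exact_mod_cast h

variable {K : Type*} [Field K] [CharZero K]

theorem Ring.choose_succ_right_eq_div (a : K) (k : ℕ) :
    Ring.choose a (k + 1) = Ring.choose a k * (a - k) / (k + 1) := by
  rw [eq_div_iff (Nat.cast_add_one_ne_zero k), Ring.choose_succ_right_eq]

/-- `y / (y + j z) * C(y + j z, j)`, written without the pole at `y + j z = 0`. -/
noncomputable def rotheCoeff (y z : K) : ℕ → K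
  | 0 => 1
  | j + 1 => y / (j + 1) * Ring.choose (y + (j + 1) * z - 1) j

@[simp]
theorem rotheCoeff_zero (y z : K) : rotheCoeff y z 0 = 1 := rfl

theorem rotheCoeff_zero_left (z : K) (j : ℕ) : rotheCoeff 0 z (j + 1) = 0 := by
  simp [rotheCoeff]

theorem rotheCoeff_add_one (y z : K) (j : ℕ) :
    rotheCoeff (y + 1) z (j + 1) = rotheCoeff y z (j + 1) + rotheCoeff (y + z) z j := by
  cases j with
  | zero => simp [rotheCoeff]
  | succ i =>
    set a := y + (i + 2) * z - 1
    have pascal : Ring.choose (y + 1 + (i + 1 + 1) * z - 1) (i + 1) =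
        Ring.choose a i + Ring.choose a (i + 1) := by
      rw [← Ring.choose_succ_succ]; congr 1; ring
    simp only [rotheCoeff, Nat.cast_add, Nat.cast_one, pascal,
      show y + z + (i + 1) * z - 1 = a by ring, show y + (i + 1 + 1) * z - 1 = a by ring,
      Ring.choose_succ_right_eq_div a i]
    have hi : (i : K) + 1 ≠ 0 := Nat.cast_add_one_ne_zero i
    have hi' : (i : K) + 1 + 1 ≠ 0 := by norm_cast
    field_simp
    ring

theorem mul_rotheCoeff (y z : K) (j : ℕ) :
    (y - j * (1 - z)) * rotheCoeff y z j = y * Ring.choose (y + j * z - 1) j := by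
  cases j with
  | zero => simp
  | succ i =>
    simp only [rotheCoeff, Nat.cast_add, Nat.cast_one, Ring.choose_succ_right_eq_div]
    have hi : (i : K) + 1 ≠ 0 := Nat.cast_add_one_ne_zero i
    field_simp
    ring

theorem sum_antidiagonal_choose_mul_rotheCoeff (x : K) (y z : ℤ) (n : ℕ) :
    ∑ p ∈ antidiagonal n, Ring.choose (x + p.1 * z) p.1 * rotheCoeff (y : K) z p.2 =
      Ring.choose (x + y + n * z) n := by
  induction n generalizing y with
  | zero => simp
  | succ n ih =>
    let lhs (y : ℤ) : K :=
      ∑ p ∈ antidiagonal (n + 1), Ring.choose (x + p.1 * z) p.1 * rotheCoeff (y : K) z p.2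
    let rhs (y : ℤ) : K := Ring.choose (x + y + (n + 1 : ℕ) * z) (n + 1)
    have lhs_add_one (y : ℤ) :
        lhs (y + 1) = lhs y + Ring.choose (x + (y + z : ℤ) + n * z) n := by
      rw [← ih]
      simp only [lhs, Nat.sum_antidiagonal_succ', rotheCoeff_zero, Int.cast_add, Int.cast_one,
        rotheCoeff_add_one, mul_add, sum_add_distrib]
      ring
    have rhs_add_one (y : ℤ) :
        rhs (y + 1) = rhs y + Ring.choose (x + (y + z : ℤ) + n * z) n := by
      simp only [rhs]
      rw [show x + (y + z : ℤ) + n * z = x + y + (n + 1 : ℕ) * z by push_cast; ring,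
        add_comm (Ring.choose _ (n + 1)), ← Ring.choose_succ_succ]
      congr 1
      push_cast
      ring
    have periodic : Function.Periodic (fun y => lhs y - rhs y) 1 := fun y => by
      simp only [lhs_add_one, rhs_add_one]
      ring
    have base : lhs 0 = rhs 0 := by
      simp [lhs, rhs, Nat.sum_antidiagonal_succ', rotheCoeff_zero_left]
    have := periodic.int_mul_eq y
    simp only [mul_one, base, sub_self] at this
    exact sub_eq_zero.mp this

theorem Ring.choose_mul_one_sub_sub_one {R : Type*} [CommRing R] [BinomialRing R]
    (a : R) (k : ℕ) :
    Ring.choose (k * (1 - a) - 1) k = (-1) ^ k * Ring.choose (k * a) k := by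
  rw [show k * (1 - a) - 1 = -(1 - k + k * a) by ring, Ring.choose_neg,
    show 1 - k + k * a + k - 1 = k * a by ring, Units.smul_def, Int.coe_negOnePow_natCast,
    zsmul_eq_mul]
  push_cast
  ring

theorem choose_eq_mul_rotheCoeff_div {a : K} (ha : a ≠ 0) {n k : ℕ} (hk : k ≤ n + 1) :
    Ring.choose (n + (a - 1) * k) (n + 1 - k) =
      k * rotheCoeff (a * (n + 1)) (1 - a) (n + 1 - k) / (n + 1) := by
  have h := mul_rotheCoeff (a * (n + 1)) (1 - a) (n + 1 - k)
  rw [Nat.cast_sub hk] at h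
  push_cast at h
  rw [show a * (n + 1) + (n + 1 - k) * (1 - a) - 1 = n + (a - 1) * k by ring] at h
  rw [eq_div_iff (Nat.cast_add_one_ne_zero n)]
  apply mul_left_cancel₀ ha
  linear_combination -h

theorem sum_Icc_choose_mul_choose_eq_div (m : ℤ) (hm : m ≠ 0) (n : ℕ) :
    ∑ k ∈ Icc 1 (n + 1), (-1) ^ (k + 1) / k * Ring.choose (m * k : K) k *
      Ring.choose (n + (m - 1) * k : K) (n + 1 - k) = m / (n + 1) := by
  have hm' : (m : K) ≠ 0 := Int.cast_ne_zero.mpr hm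
  have hN : (n : K) + 1 ≠ 0 := Nat.cast_add_one_ne_zero n
  have rothe := sum_antidiagonal_choose_mul_rotheCoeff (-1 : K) (m * (n + 1 : ℕ)) (1 - m) (n + 1)
  rw [Nat.sum_antidiagonal_eq_sum_range_succ_mk, Nat.succ_eq_add_one, Nat.range_succ_eq_Icc_zero,
    ← insert_Icc_add_one_left_eq_Icc (Nat.zero_le _), sum_insert (by simp)] at rothe
  push_cast at rothe
  have first_term : rotheCoeff (m * (n + 1) : K) (1 - m) (n + 1) = m := by
    rw [rotheCoeff, show (m * (n + 1) + (n + 1) * (1 - m) - 1 : K) = (n : ℕ) by ring,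
      Ring.choose_natCast, Nat.choose_self, Nat.cast_one]
    field_simp
  have rhs_eq_zero : Ring.choose (-1 + m * (n + 1) + (n + 1) * (1 - m) : K) (n + 1) = 0 := by
    rw [show (-1 + m * (n + 1) + (n + 1) * (1 - m) : K) = (n : ℕ) by ring, Ring.choose_natCast,
      Nat.choose_eq_zero_of_lt n.lt_succ_self, Nat.cast_zero]
  have term : ∀ k ∈ Icc 1 (n + 1), (-1) ^ (k + 1) / k * Ring.choose (m * k : K) k *
      Ring.choose (n + (m - 1) * k : K) (n + 1 - k) =
      -(Ring.choose (-1 + k * (1 - m) : K) k *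
        rotheCoeff (m * (n + 1) : K) (1 - m) (n + 1 - k)) / (n + 1) := by
    intro k hk
    obtain ⟨hk1, hkn⟩ := mem_Icc.mp hk
    have hk0 : (k : K) ≠ 0 := Nat.cast_ne_zero.mpr (by omega)
    rw [choose_eq_mul_rotheCoeff_div hm' hkn,
      show (-1 + k * (1 - m) : K) = k * (1 - m) - 1 by ring, Ring.choose_mul_one_sub_sub_one,
      mul_comm (m : K)]
    field_simp
    ring
  simp only [zero_mul, add_zero, Ring.choose_zero_right, one_mul, first_term, rhs_eq_zero]
    at rothe
  rw [sum_congr rfl term, ← sum_div, sum_neg_distrib, eq_neg_of_add_eq_zero_right rothe]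
  field_simp

theorem sum_Icc_mul_choose_add_one_sub {R : Type*} [CommRing R] [BinomialRing R]
    (f b : ℕ → R) (n : ℕ) :
    ∑ k ∈ Icc 1 (n + 1), f k * Ring.choose (b k + 1) (n + 1 - k) -
      ∑ k ∈ Icc 1 n, f k * Ring.choose (b k) (n - k) =
      ∑ k ∈ Icc 1 (n + 1), f k * Ring.choose (b k) (n + 1 - k) := by
  rw [sum_Icc_succ_top (by omega), sum_Icc_succ_top (by omega), Nat.sub_self,
    Ring.choose_zero_right, Ring.choose_zero_right, add_sub_right_comm, ← sum_sub_distrib]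
  congr 1
  refine sum_congr rfl fun k hk => ?_
  rw [show n + 1 - k = n - k + 1 by grind, Ring.choose_succ_succ]
  ring

theorem S_add_one_sub_S (m : ℤ) (hm : m ≠ 0) (n : ℕ) : S m (n + 1) - S m n = 1 / (n + 1) := by
  have h := sum_Icc_mul_choose_add_one_sub
    (fun k => (-1) ^ (k + 1) / k * Ring.choose (m * k : ℚ) k) (fun k => n + (m - 1) * k) n
  simp only [S, gchoose_eq_choose, ← mul_sub]
  push_cast
  simp only [add_right_comm _ (1 : ℚ)]
  rw [h, sum_Icc_choose_mul_choose_eq_div m hm]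
  field_simp

/-- For every nonzero integer `m`, the generating function `A_m = Σ_{n≥0} S_m(n) x^n`
satisfies `(1 − x)·A_m = Σ_{n≥1} x^n/n`, i.e. `A_m = −log(1−x)/(1−x)`. -/
theorem generating_function_eq (m : ℤ) (hm : m ≠ 0) :
    (1 - X) * (PowerSeries.mk fun n => S m n) =
      PowerSeries.mk fun n => if n = 0 then 0 else 1 / (n : ℚ) := by
  ext (_ | n)
  · simp [S]
  · rw [sub_mul, one_mul, map_sub, coeff_succ_X_mul, coeff_mk, coeff_mk, coeff_mk,
      S_add_one_sub_S m hm]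
    simp
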